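/- arXiv:1909.02299 — 2 statements merged into one kernel-verified Lean document; each statement's English description precedes it below -/
import Mathlib

section
/- Let M be a metric space, F a set of continuous functions M → ℂ that is equicontinuous on each compact subset and uniformly bounded on each compact subset, and let P^k be defined as P^k f(x) = ∑_t f(t) η^k_t(x) from locally finite partitions of unity subordinated to covers by balls of radius 1/k. Then sup_{f∈F} sup_{x∈T} |P^k f(x) − f(x)| → 0 as k → ∞ for every compact T ⊆ M. -/
/-!
By a Heine–Cantor argument, equicontinuity at the points of a compact `T` is uniform: one `δ`
makes `‖f t - f x‖ < ε / 2` for all `f ∈ F`, `x ∈ T` and `dist x t < δ`. Once `1 / k < δ`, the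
only `t` with `η k t x ≠ 0` lie within `1 / k` of `x`, and `P^k f x - f x` is a convex combination
of such differences `f t - f x`.
-/

open Uniformity Function

theorem IsCompact.mem_uniformity_of_equicontinuousAt {ι X E : Type*} [UniformSpace X]
    [UniformSpace E] {F : ι → X → E} {s : Set X} (hs : IsCompact s)
    (hF : ∀ x ∈ s, EquicontinuousAt F x) {r : Set (E × E)} (hr : r ∈ 𝓤 E) :
    {p : X × X | p.1 ∈ s → ∀ i, (F i p.1, F i p.2) ∈ r} ∈ 𝓤 X :=
  -- equicontinuity is continuity into `ι →ᵤ E`, where Heine–Cantor applies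
  hs.uniformContinuousAt_of_continuousAt (UniformFun.ofFun ∘ swap F)
    (fun x hx => equicontinuousAt_iff_continuousAt.mp (hF x hx))
    ((UniformFun.hasBasis_uniformity ι E).mem_of_mem hr)

theorem IsCompact.exists_forall_dist_lt_of_equicontinuousAt {ι X E : Type*}
    [PseudoMetricSpace X] [PseudoMetricSpace E] {F : ι → X → E} {s : Set X} (hs : IsCompact s)
    (hF : ∀ x ∈ s, EquicontinuousAt F x) {ε : ℝ} (hε : 0 < ε) :
    ∃ δ > 0, ∀ x ∈ s, ∀ y, dist x y < δ → ∀ i, dist (F i x) (F i y) < ε := by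
  obtain ⟨δ, hδ, hsub⟩ := Metric.mem_uniformity_dist.mp
    (hs.mem_uniformity_of_equicontinuousAt hF (Metric.dist_mem_uniformity hε))
  exact ⟨δ, hδ, fun x hx y hxy => hsub hxy hx⟩

theorem norm_finsum_mul_sub_le_of_finsum_eq_one {α 𝕜 : Type*} [RCLike 𝕜] {w : α → ℝ}
    (hw0 : ∀ t, 0 ≤ w t) (hfin : (support w).Finite) (hw1 : ∑ᶠ t, w t = 1)
    {g : α → 𝕜} {z : 𝕜} {r : ℝ} (hg : ∀ t, w t ≠ 0 → ‖g t - z‖ ≤ r) :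
    ‖(∑ᶠ t, g t * (w t : 𝕜)) - z‖ ≤ r := by
  classical
  set s := hfin.toFinset
  have hsub : ∀ {h : α → 𝕜}, support (fun t => h t * (w t : 𝕜)) ⊆ s := fun {h} t ht =>
    hfin.mem_toFinset.mpr fun h0 => ht (by simp [h0])
  have hs1 : ∑ t ∈ s, w t = 1 := by
    rwa [← finsum_eq_sum_of_support_subset _ (by simp [s])]
  have hz : z = ∑ t ∈ s, z * (w t : 𝕜) := by
    rw [← Finset.mul_sum, ← RCLike.ofReal_sum, hs1, RCLike.ofReal_one, mul_one]
  calc ‖(∑ᶠ t, g t * (w t : 𝕜)) - z‖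
      = ‖∑ t ∈ s, (g t - z) * (w t : 𝕜)‖ := by
        rw [finsum_eq_sum_of_support_subset _ hsub]
        simp only [sub_mul, Finset.sum_sub_distrib, ← hz]
    _ ≤ ∑ t ∈ s, r * w t := by
        refine (norm_sum_le _ _).trans (Finset.sum_le_sum fun t ht => ?_)
        rw [norm_mul, RCLike.norm_ofReal, abs_of_nonneg (hw0 t)]
        exact mul_le_mul_of_nonneg_right (hg t (hfin.mem_toFinset.mp ht)) (hw0 t)
    _ = r := by rw [← Finset.mul_sum, hs1, mul_one]

theorem partition_operators_tendsto_uniformly_on_totally_bounded_general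
    {M : Type*} [MetricSpace M] (η : ℕ → M → M → ℝ)
    (hnonneg : ∀ k, 1 ≤ k → ∀ t x, 0 ≤ η k t x)
    (hlf : ∀ k, 1 ≤ k → LocallyFinite fun t => Function.support (η k t))
    (hsum : ∀ k, 1 ≤ k → ∀ x, ∑ᶠ t, η k t x = 1)
    (hsupp : ∀ k, 1 ≤ k → ∀ t, Function.support (η k t) ⊆ Metric.ball t (1 / (k : ℝ)))
    (F : Set (M → ℂ))
    (hEq : ∀ K : Set M, IsCompact K → ∀ x ∈ K,
      EquicontinuousAt (fun f : F => (f : M → ℂ)) x) :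
    ∀ T : Set M, IsCompact T → ∀ ε > (0 : ℝ), ∃ N : ℕ, ∀ k ≥ N, 1 ≤ k →
      ∀ f ∈ F, ∀ x ∈ T, ‖(∑ᶠ t, f t * (η k t x : ℂ)) - f x‖ < ε := by
  intro T hT ε hε
  obtain ⟨δ, hδ, hclose⟩ :=
    hT.exists_forall_dist_lt_of_equicontinuousAt (hEq T hT) (half_pos hε)
  obtain ⟨n, hn⟩ := exists_nat_one_div_lt hδ
  refine ⟨n + 1, fun k hk hk1 f hf x hx => ?_⟩
  have hkδ : 1 / (k : ℝ) < δ :=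
    (one_div_le_one_div_of_le (by positivity) (by exact_mod_cast hk)).trans_lt hn
  refine (norm_finsum_mul_sub_le_of_finsum_eq_one (hnonneg k hk1 · x)
    ((hlf k hk1).point_finite x) (hsum k hk1 x) fun t ht => ?_).trans_lt (half_lt_self hε)
  have hxt : dist x t < δ := (Metric.mem_ball.mp (hsupp k hk1 t ht)).trans hkδ
  rw [← dist_eq_norm, dist_comm]
  exact (hclose x hx t hxt ⟨f, hf⟩).le

/-- If `F` is a set of continuous functions `M → ℂ`, equicontinuous and uniformly bounded
on each compact subset, and `P^k f x = ∑ t, f t * η^k t x` comes from locally finite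
partitions of unity subordinated to covers by balls of radius `1/k`, then
`sup_{f ∈ F} sup_{x ∈ T} |P^k f x − f x| → 0` as `k → ∞` for every compact `T`. -/
theorem partition_operators_tendsto_uniformly_on_totally_bounded
    {M : Type*} [MetricSpace M] (η : ℕ → M → M → ℝ)
    (hcont : ∀ k, 1 ≤ k → ∀ t, Continuous (η k t))
    (hnonneg : ∀ k, 1 ≤ k → ∀ t x, 0 ≤ η k t x)
    (hle : ∀ k, 1 ≤ k → ∀ t x, η k t x ≤ 1)
    (hlf : ∀ k, 1 ≤ k → LocallyFinite fun t => Function.support (η k t))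
    (hsum : ∀ k, 1 ≤ k → ∀ x, ∑ᶠ t, η k t x = 1)
    (hsupp : ∀ k, 1 ≤ k → ∀ t, Function.support (η k t) ⊆ Metric.ball t (1 / (k : ℝ)))
    (F : Set (M → ℂ)) (hFc : ∀ f ∈ F, Continuous f)
    (hEq : ∀ K : Set M, IsCompact K → ∀ x ∈ K,
      EquicontinuousAt (fun f : F => (f : M → ℂ)) x)
    (hBd : ∀ K : Set M, IsCompact K → ∃ C : ℝ, ∀ f ∈ F, ∀ x ∈ K, ‖f x‖ ≤ C) :
    ∀ T : Set M, IsCompact T → ∀ ε > (0 : ℝ), ∃ N : ℕ, ∀ k ≥ N, 1 ≤ k →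
      ∀ f ∈ F, ∀ x ∈ T, ‖(∑ᶠ t, f t * (η k t x : ℂ)) - f x‖ < ε :=
  partition_operators_tendsto_uniformly_on_totally_bounded_general η hnonneg hlf hsum hsupp F hEq
end

section
/- Let M be a metric space. Then the identity operator on C(M) (with the topology of uniform convergence on compact sets) is a limit of finite-rank continuous linear operators, uniformly on sets F ⊆ C(M) that are equicontinuous and uniformly bounded on each compact subset of M: for every such F, every compact T ⊆ M, and every ε > 0, there exists a finite-rank continuous linear operator Q : C(M) → C(M) with sup_{f∈F} sup_{x∈T} |Qf(x) − f(x)| < ε. -/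
/-!
By equicontinuity, every point of `T` has a neighbourhood on which all `f ∈ F` oscillate by at
most `ε / 2`. Take a partition of unity `(ρ i)` on `T` subordinate to finitely many of these
neighbourhoods, centred at points `t i`, and put `Q f = ∑ i, f (t i) • ρ i`. Then `Q f x - f x` is
a convex combination of the values `f (t i) - f x` with `ρ i x ≠ 0`, each of norm at most `ε / 2`.
-/

open Topology

namespace ContinuousMap

variable {X 𝕜 ι : Type*} [TopologicalSpace X] [NormedField 𝕜] [Fintype ι]

noncomputable def interpolationCLM (t : ι → X) (g : ι → C(X, 𝕜)) : C(X, 𝕜) →L[𝕜] C(X, 𝕜) :=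
  ∑ i, (evalCLM 𝕜 (t i)).smulRight (g i)

theorem interpolationCLM_apply (t : ι → X) (g : ι → C(X, 𝕜)) (f : C(X, 𝕜)) (x : X) :
    interpolationCLM t g f x = ∑ i, f (t i) * g i x := by
  simp [interpolationCLM]

theorem range_interpolationCLM_le (t : ι → X) (g : ι → C(X, 𝕜)) :
    LinearMap.range (interpolationCLM t g : C(X, 𝕜) →ₗ[𝕜] C(X, 𝕜)) ≤
      Submodule.span 𝕜 (Set.range g) := by
  rintro _ ⟨f, rfl⟩
  simp only [interpolationCLM, ContinuousLinearMap.coe_coe, _root_.sum_apply,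
    ContinuousLinearMap.smulRight_apply]
  exact Submodule.sum_mem _ fun i _ =>
    Submodule.smul_mem _ _ (Submodule.subset_span (Set.mem_range_self i))

theorem finiteDimensional_range_interpolationCLM (t : ι → X) (g : ι → C(X, 𝕜)) :
    FiniteDimensional 𝕜 (LinearMap.range (interpolationCLM t g : C(X, 𝕜) →ₗ[𝕜] C(X, 𝕜))) :=
  have := FiniteDimensional.span_of_finite 𝕜 (Set.finite_range g)
  Submodule.finiteDimensional_of_le (range_interpolationCLM_le t g)

end ContinuousMap

theorem IsCompact.exists_finset_partitionOfUnity_isSubordinate {X : Type*} [TopologicalSpace X]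
    [T2Space X] [ParacompactSpace X] {T : Set X} (hT : IsCompact T) {U : X → Set X}
    (hU : ∀ x ∈ T, U x ∈ 𝓝 x) :
    ∃ s : Finset X, ∃ ρ : PartitionOfUnity s X T, ρ.IsSubordinate fun i => U i := by
  obtain ⟨s, -, hsT⟩ := hT.elim_nhds_subcover (fun x => interior (U x))
    fun x hx => interior_mem_nhds.2 (hU x hx)
  obtain ⟨ρ, hρ⟩ := PartitionOfUnity.exists_isSubordinate hT.isClosed
    (fun i : s => interior (U i)) (fun _ => isOpen_interior)
    (by simpa [Set.iUnion_subtype] using hsT)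
  exact ⟨s, ρ, fun i => (hρ i).trans interior_subset⟩

namespace PartitionOfUnity

variable {ι X : Type*} [Fintype ι] [TopologicalSpace X] {T : Set X}

noncomputable def interpolationCLM (𝕜 : Type*) [RCLike 𝕜] (ρ : PartitionOfUnity ι X T)
    (t : ι → X) : C(X, 𝕜) →L[𝕜] C(X, 𝕜) :=
  ContinuousMap.interpolationCLM t fun i => ((RCLike.ofRealCLM : ℝ →L[ℝ] 𝕜) : C(ℝ, 𝕜)).comp (ρ i)

theorem interpolationCLM_apply_eq_finsum {𝕜 : Type*} [RCLike 𝕜] (ρ : PartitionOfUnity ι X T)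
    (t : ι → X) (f : C(X, 𝕜)) (x : X) :
    ρ.interpolationCLM 𝕜 t f x = ∑ᶠ i, ρ i x • f (t i) := by
  simp [interpolationCLM, ContinuousMap.interpolationCLM_apply, finsum_eq_sum_of_fintype,
    RCLike.real_smul_eq_coe_mul, mul_comm]

theorem norm_interpolationCLM_sub_le {𝕜 : Type*} [RCLike 𝕜] (ρ : PartitionOfUnity ι X T)
    (t : ι → X) {f : C(X, 𝕜)} {η : ℝ} {x : X} (hx : x ∈ T)
    (hf : ∀ i, ρ i x ≠ 0 → ‖f (t i) - f x‖ ≤ η) :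
    ‖ρ.interpolationCLM 𝕜 t f x - f x‖ ≤ η := by
  rw [interpolationCLM_apply_eq_finsum, ← mem_closedBall_iff_norm]
  exact ρ.finsum_smul_mem_convex (g := fun i _ => f (t i)) hx
    (fun i hi => mem_closedBall_iff_norm.2 (hf i hi)) (convex_closedBall _ η)

end PartitionOfUnity

theorem identity_approx_by_finite_rank_general
    {M : Type*} [MetricSpace M]
    (F : Set C(M, ℂ))
    (hEq : ∀ K : Set M, IsCompact K → ∀ x ∈ K,
      EquicontinuousAt (fun f : F => ((f : C(M, ℂ)) : M → ℂ)) x)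
    (T : Set M) (hT : IsCompact T) (ε : ℝ) (hε : 0 < ε) :
    ∃ Q : C(M, ℂ) →L[ℂ] C(M, ℂ),
      (∃ V : Submodule ℂ C(M, ℂ), FiniteDimensional ℂ V ∧
        LinearMap.range (Q : C(M, ℂ) →ₗ[ℂ] C(M, ℂ)) ≤ V) ∧
      ∀ f ∈ F, ∀ x ∈ T, ‖Q f x - f x‖ < ε := by
  have hU : ∀ x ∈ T, {y | ∀ f ∈ F, ‖f x - f y‖ ≤ ε / 2} ∈ 𝓝 x := fun x hx => by
    filter_upwards [hEq T hT x hx _ (Metric.dist_mem_uniformity (half_pos hε))] with y hy f hf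
    simpa [dist_eq_norm] using (hy ⟨f, hf⟩).le
  obtain ⟨s, ρ, hρ⟩ := hT.exists_finset_partitionOfUnity_isSubordinate hU
  refine ⟨ρ.interpolationCLM ℂ (↑),
    ⟨_, ContinuousMap.finiteDimensional_range_interpolationCLM _ _, le_rfl⟩, fun f hf x hx => ?_⟩
  calc _ ≤ ε / 2 :=
        ρ.norm_interpolationCLM_sub_le _ hx fun i hi => hρ i (subset_tsupport _ hi) f hf
    _ < ε := half_lt_self hε

/-- The identity operator on `C(M, ℂ)` (compact-open topology, i.e. uniform convergence
on compacts) is a limit of finite-rank continuous linear operators, uniformly on sets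
`F` that are equicontinuous and uniformly bounded on each compact subset of `M`. -/
theorem identity_approx_by_finite_rank
    {M : Type*} [MetricSpace M]
    (F : Set C(M, ℂ))
    (hEq : ∀ K : Set M, IsCompact K → ∀ x ∈ K,
      EquicontinuousAt (fun f : F => ((f : C(M, ℂ)) : M → ℂ)) x)
    (hBd : ∀ K : Set M, IsCompact K → ∃ C : ℝ, ∀ f ∈ F, ∀ x ∈ K, ‖f x‖ ≤ C)
    (T : Set M) (hT : IsCompact T) (ε : ℝ) (hε : 0 < ε) :
    ∃ Q : C(M, ℂ) →L[ℂ] C(M, ℂ),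
      (∃ V : Submodule ℂ C(M, ℂ), FiniteDimensional ℂ V ∧
        LinearMap.range (Q : C(M, ℂ) →ₗ[ℂ] C(M, ℂ)) ≤ V) ∧
      ∀ f ∈ F, ∀ x ∈ T, ‖Q f x - f x‖ < ε :=
  identity_approx_by_finite_rank_general F hEq T hT ε hε
end
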